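/- Let 0 < s < 1, ε > 0, and define ψ̃(x,y) = -ε^{s/(s+1)} r^{2/(s+1)} K(θ) in polar coordinates x = r cos θ, y = r sin θ, where K solves K'' + (4/(1+s)²)K = -K^{-s} on (0, π/2) with K(0) = K(π/2) = 0 and K > 0 on (0, π/2). Then ψ̃ satisfies Δψ̃ = ε^s/(-ψ̃)^s in the open first quadrant {x > 0, y > 0} and vanishes on the boundary axes. -/

import Mathlib

open Real

/-- The Laplacian of a function on `ℝ²`, computed via iterated partial derivatives. -/
noncomputable def laplacian (ψ : ℝ × ℝ → ℝ) (p : ℝ × ℝ) : ℝ :=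
  deriv (fun x => deriv (fun x' => ψ (x', p.2)) x) p.1 +
  deriv (fun y => deriv (fun y' => ψ (p.1, y')) y) p.2

/-- The self-similar profile `ψ̃ = -ε^{s/(s+1)} r^{2/(s+1)} K(θ)` in polar coordinates. -/
noncomputable def psiTilde (s ε : ℝ) (K : ℝ → ℝ) (p : ℝ × ℝ) : ℝ :=
  -(ε ^ (s / (s + 1)) * (Real.sqrt (p.1 ^ 2 + p.2 ^ 2)) ^ (2 / (s + 1))
      * K (Complex.arg (Complex.mk p.1 p.2)))

lemma arg_mk_pos {x y : ℝ} (hx : 0 < x) :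
    Complex.arg (Complex.mk x y) = Real.arctan (y / x) := by
  have hg : (0:ℝ) < x^2 + y^2 := by positivity
  have habs : ‖Complex.mk x y‖ = Real.sqrt (x^2 + y^2) := by
    rw [Complex.norm_def, Complex.normSq_mk]; ring_nf
  have hre : (Complex.mk x y).re = x := rfl
  have him : (Complex.mk x y).im = y := rfl
  rw [Complex.arg, hre, him, if_pos hx.le, habs, Real.arctan_eq_arcsin]
  congr 1
  have h1 : (1 : ℝ) + (y/x)^2 = (x^2+y^2)/x^2 := by field_simp
  rw [h1, Real.sqrt_div (by positivity) , Real.sqrt_sq hx.le]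
  field_simp

lemma sqrt_rpow_two_mul {t b : ℝ} (ht : 0 ≤ t) : (Real.sqrt t) ^ (2 * b) = t ^ b := by
  rw [Real.sqrt_eq_rpow, ← Real.rpow_mul ht]
  congr 1; ring

noncomputable def Efun (c β : ℝ) (K : ℝ → ℝ) (x y : ℝ) : ℝ :=
  -(c * (x^2 + y^2) ^ β * K (Real.arctan (y / x)))

lemma frac_simp {x y : ℝ} (hx : 0 < x) : 1 / (1 + (y/x)^2) * -(y/x^2) = -(y/(x^2+y^2)) := by
  have hg : (0:ℝ) < x^2 + y^2 := by positivity
  rw [show (1 : ℝ) + (y/x)^2 = (x^2+y^2)/x^2 by field_simp]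
  field_simp

lemma hasDerivAt_E_x (c β : ℝ) (K : ℝ → ℝ) {x y : ℝ} (hx : 0 < x) (hy : 0 < y)
    (hK : HasDerivAt K (deriv K (arctan (y/x))) (arctan (y/x))) :
    HasDerivAt (fun t => Efun c β K t y)
      (-(c * ((x^2+y^2) ^ (β-1) *
        (2*β*x*K (arctan (y/x)) - y * deriv K (arctan (y/x)))))) x := by
  have hg : (0:ℝ) < x^2 + y^2 := by positivity
  have hgd : HasDerivAt (fun t : ℝ => t^2 + y^2) (2*x) x := by
    simpa using (hasDerivAt_pow 2 x).add_const (y^2)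
  have hgp : HasDerivAt (fun t : ℝ => (t^2+y^2) ^ β) ((2*x) * β * (x^2+y^2)^(β-1)) x :=
    hgd.rpow_const (Or.inl hg.ne')
  have hdiv : HasDerivAt (fun t : ℝ => y / t) (-(y / x^2)) x := by
    have := (hasDerivAt_inv hx.ne').const_mul y
    simpa [div_eq_mul_inv, neg_div] using this
  have hθ : HasDerivAt (fun t : ℝ => arctan (y/t)) (-(y/(x^2+y^2))) x := by
    have := hdiv.arctan
    rwa [frac_simp hx] at this
  have hKc : HasDerivAt (fun t : ℝ => K (arctan (y/t)))
      (deriv K (arctan (y/x)) * -(y/(x^2+y^2))) x := hK.comp x hθ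
  have h := ((hgp.mul hKc).const_mul c).neg
  convert h using 1
  · rfl
  · rfl
  · funext t; simp [Efun, mul_assoc]
  have hgb : (x^2+y^2) ^ β = (x^2+y^2) ^ (β-1) * (x^2+y^2) := by
    rw [← Real.rpow_add_one hg.ne' (β-1)]; ring_nf
  rw [hgb]
  field_simp
  ring

noncomputable def FX (c β : ℝ) (K : ℝ → ℝ) (x y : ℝ) : ℝ :=
  -(c * ((x^2+y^2) ^ (β-1) *
    (2*β*x*K (arctan (y/x)) - y * deriv K (arctan (y/x)))))

lemma hasDerivAt_FX (c β : ℝ) (K : ℝ → ℝ) {x y : ℝ} (hx : 0 < x) (hy : 0 < y)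
    (hK : HasDerivAt K (deriv K (arctan (y/x))) (arctan (y/x)))
    (hK2 : HasDerivAt (deriv K) (deriv (deriv K) (arctan (y/x))) (arctan (y/x))) :
    HasDerivAt (fun t => FX c β K t y)
      (-(c * ((x^2+y^2) ^ (β-2) *
        (4*β*(β-1)*x^2*K (arctan (y/x)) - 2*(β-1)*x*y*deriv K (arctan (y/x))
         + 2*β*(x^2+y^2)*K (arctan (y/x)) - 2*β*x*y*deriv K (arctan (y/x))
         + y^2*deriv (deriv K) (arctan (y/x)))))) x := by
  have hg : (0:ℝ) < x^2 + y^2 := by positivity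
  have hgd : HasDerivAt (fun t : ℝ => t^2 + y^2) (2*x) x := by
    simpa using (hasDerivAt_pow 2 x).add_const (y^2)
  have hh : HasDerivAt (fun t : ℝ => (t^2+y^2) ^ (β-1)) ((2*x) * (β-1) * (x^2+y^2)^(β-1-1)) x :=
    hgd.rpow_const (Or.inl hg.ne')
  have hdiv : HasDerivAt (fun t : ℝ => y / t) (-(y / x^2)) x := by
    have := (hasDerivAt_inv hx.ne').const_mul y
    simpa [div_eq_mul_inv, neg_div] using this
  have hθ : HasDerivAt (fun t : ℝ => arctan (y/t)) (-(y/(x^2+y^2))) x := by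
    have := hdiv.arctan
    rwa [frac_simp hx] at this
  have hKc : HasDerivAt (fun t : ℝ => K (arctan (y/t)))
      (deriv K (arctan (y/x)) * -(y/(x^2+y^2))) x := hK.comp x hθ
  have hK'c : HasDerivAt (fun t : ℝ => deriv K (arctan (y/t)))
      (deriv (deriv K) (arctan (y/x)) * -(y/(x^2+y^2))) x := HasDerivAt.comp (h₂ := deriv K) x hK2 hθ
  have hlin : HasDerivAt (fun t : ℝ => 2*β*t) (2*β) x := by
    simpa using (hasDerivAt_id x).const_mul (2*β)
  have hq : HasDerivAt (fun t : ℝ => 2*β*t*K (arctan (y/t)) - y * deriv K (arctan (y/t)))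
      ((2*β) * K (arctan (y/x)) + 2*β*x*(deriv K (arctan (y/x)) * -(y/(x^2+y^2)))
        - y * (deriv (deriv K) (arctan (y/x)) * -(y/(x^2+y^2)))) x :=
    (hlin.mul hKc).sub (hK'c.const_mul y)
  have h := ((hh.mul hq).const_mul c).neg
  convert h using 1
  · rfl
  · rfl
  · rfl
  rw [show (β:ℝ)-1 = (β-2)+1 from by ring, Real.rpow_add_one hg.ne']
  field_simp
  ring

lemma frac_simp2 {x y : ℝ} (hx : 0 < x) : 1 / (1 + (y/x)^2) * (1/x) = x/(x^2+y^2) := by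
  rw [show (1 : ℝ) + (y/x)^2 = (x^2+y^2)/x^2 by field_simp]
  have hg : (0:ℝ) < x^2 + y^2 := by positivity
  field_simp

lemma hasDerivAt_E_y (c β : ℝ) (K : ℝ → ℝ) {x y : ℝ} (hx : 0 < x) (hy : 0 < y)
    (hK : HasDerivAt K (deriv K (arctan (y/x))) (arctan (y/x))) :
    HasDerivAt (fun t => Efun c β K x t)
      (-(c * ((x^2+y^2) ^ (β-1) *
        (2*β*y*K (arctan (y/x)) + x * deriv K (arctan (y/x)))))) y := by
  have hg : (0:ℝ) < x^2 + y^2 := by positivity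
  have hgd : HasDerivAt (fun t : ℝ => x^2 + t^2) (2*y) y := by
    simpa using ((hasDerivAt_pow 2 y).const_add (x^2))
  have hgp : HasDerivAt (fun t : ℝ => (x^2+t^2) ^ β) ((2*y) * β * (x^2+y^2)^(β-1)) y :=
    hgd.rpow_const (Or.inl hg.ne')
  have hdiv : HasDerivAt (fun t : ℝ => t / x) (1/x) y := by
    simpa using (hasDerivAt_id y).div_const x
  have hθ : HasDerivAt (fun t : ℝ => arctan (t/x)) (x/(x^2+y^2)) y := by
    have := hdiv.arctan
    rwa [frac_simp2 hx] at this
  have hKc : HasDerivAt (fun t : ℝ => K (arctan (t/x)))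
      (deriv K (arctan (y/x)) * (x/(x^2+y^2))) y := hK.comp y hθ
  have h := ((hgp.mul hKc).const_mul c).neg
  convert h using 1
  · rfl
  · rfl
  · funext t; simp [Efun, mul_assoc]
  rw [show (β:ℝ) = (β-1)+1 from by ring, Real.rpow_add_one hg.ne']
  field_simp
  ring

noncomputable def FY (c β : ℝ) (K : ℝ → ℝ) (x y : ℝ) : ℝ :=
  -(c * ((x^2+y^2) ^ (β-1) *
    (2*β*y*K (arctan (y/x)) + x * deriv K (arctan (y/x)))))

lemma hasDerivAt_FY (c β : ℝ) (K : ℝ → ℝ) {x y : ℝ} (hx : 0 < x) (hy : 0 < y)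
    (hK : HasDerivAt K (deriv K (arctan (y/x))) (arctan (y/x)))
    (hK2 : HasDerivAt (deriv K) (deriv (deriv K) (arctan (y/x))) (arctan (y/x))) :
    HasDerivAt (fun t => FY c β K x t)
      (-(c * ((x^2+y^2) ^ (β-2) *
        (4*β*(β-1)*y^2*K (arctan (y/x)) + 2*(β-1)*x*y*deriv K (arctan (y/x))
         + 2*β*(x^2+y^2)*K (arctan (y/x)) + 2*β*x*y*deriv K (arctan (y/x))
         + x^2*deriv (deriv K) (arctan (y/x)))))) y := by
  have hg : (0:ℝ) < x^2 + y^2 := by positivity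
  have hgd : HasDerivAt (fun t : ℝ => x^2 + t^2) (2*y) y := by
    simpa using ((hasDerivAt_pow 2 y).const_add (x^2))
  have hh : HasDerivAt (fun t : ℝ => (x^2+t^2) ^ (β-1)) ((2*y) * (β-1) * (x^2+y^2)^(β-1-1)) y :=
    hgd.rpow_const (Or.inl hg.ne')
  have hdiv : HasDerivAt (fun t : ℝ => t / x) (1/x) y := by
    simpa using (hasDerivAt_id y).div_const x
  have hθ : HasDerivAt (fun t : ℝ => arctan (t/x)) (x/(x^2+y^2)) y := by
    have := hdiv.arctan
    rwa [frac_simp2 hx] at this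
  have hKc : HasDerivAt (fun t : ℝ => K (arctan (t/x)))
      (deriv K (arctan (y/x)) * (x/(x^2+y^2))) y := hK.comp y hθ
  have hK'c : HasDerivAt (fun t : ℝ => deriv K (arctan (t/x)))
      (deriv (deriv K) (arctan (y/x)) * (x/(x^2+y^2))) y := HasDerivAt.comp (h₂ := deriv K) y hK2 hθ
  have hlin : HasDerivAt (fun t : ℝ => 2*β*t) (2*β) y := by
    simpa using (hasDerivAt_id y).const_mul (2*β)
  have hq : HasDerivAt (fun t : ℝ => 2*β*t*K (arctan (t/x)) + x * deriv K (arctan (t/x)))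
      ((2*β) * K (arctan (y/x)) + 2*β*y*(deriv K (arctan (y/x)) * (x/(x^2+y^2)))
        + x * (deriv (deriv K) (arctan (y/x)) * (x/(x^2+y^2)))) y :=
    (hlin.mul hKc).add (hK'c.const_mul x)
  have h := ((hh.mul hq).const_mul c).neg
  convert h using 1
  · rfl
  · rfl
  · rfl
  rw [show (β:ℝ)-1 = (β-2)+1 from by ring, Real.rpow_add_one hg.ne']
  field_simp
  ring

/-- If `K` solves `K'' + (4/(1+s)²)K = -K^{-s}` on `(0,π/2)` with `K(0) = K(π/2) = 0`
and `K > 0` inside, then `ψ̃(r,θ) = -ε^{s/(s+1)} r^{2/(s+1)} K(θ)` satisfies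
`Δψ̃ = ε^s/(-ψ̃)^s` in the open first quadrant and vanishes on the boundary axes. -/
theorem psiTilde_solves (s ε : ℝ) (hs : 0 < s) (hs1 : s < 1) (hε : 0 < ε)
    (K : ℝ → ℝ) (hC2 : ContDiffOn ℝ 2 K (Set.Ioo 0 (π / 2)))
    (hK0 : K 0 = 0) (hKpi : K (π / 2) = 0)
    (hpos : ∀ θ ∈ Set.Ioo (0 : ℝ) (π / 2), 0 < K θ)
    (hode : ∀ θ ∈ Set.Ioo (0 : ℝ) (π / 2),
      deriv (deriv K) θ + (4 / (1 + s) ^ 2) * K θ = -(K θ) ^ (-s)) :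
    (∀ p : ℝ × ℝ, 0 < p.1 → 0 < p.2 →
      laplacian (psiTilde s ε K) p = ε ^ s / (-(psiTilde s ε K p)) ^ s) ∧
    (∀ x : ℝ, 0 ≤ x → psiTilde s ε K (x, 0) = 0) ∧
    (∀ y : ℝ, 0 ≤ y → psiTilde s ε K (0, y) = 0) := by
  have hs1' : (0:ℝ) < s + 1 := by linarith
  set c := ε ^ (s / (s + 1)) with hc
  set β := 1 / (s + 1) with hβ
  have hcpos : 0 < c := Real.rpow_pos_of_pos hε _
  have hpt : ∀ x y : ℝ, 0 < x → psiTilde s ε K (x, y) = Efun c β K x y := by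
    intro x y hx
    have hg : (0:ℝ) ≤ x^2 + y^2 := by positivity
    show -(c * (Real.sqrt (x^2 + y^2)) ^ (2/(s+1)) * K (Complex.arg (Complex.mk x y)))
        = Efun c β K x y
    rw [arg_mk_pos hx, show (2:ℝ)/(s+1) = 2 * β from by rw [hβ]; ring,
      sqrt_rpow_two_mul hg]
    simp [Efun, mul_assoc]
  have hK1 : ∀ θ ∈ Set.Ioo (0:ℝ) (π/2), HasDerivAt K (deriv K θ) θ := fun θ hθ =>
    ((hC2.contDiffAt (isOpen_Ioo.mem_nhds hθ)).differentiableAt (by norm_num)).hasDerivAt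
  have hCd : ContDiffOn ℝ 1 (deriv K) (Set.Ioo 0 (π/2)) :=
    hC2.deriv_of_isOpen isOpen_Ioo (by norm_num)
  have hK2 : ∀ θ ∈ Set.Ioo (0:ℝ) (π/2), HasDerivAt (deriv K) (deriv (deriv K) θ) θ :=
    fun θ hθ =>
      ((hCd.contDiffAt (isOpen_Ioo.mem_nhds hθ)).differentiableAt one_ne_zero).hasDerivAt
  have hmem : ∀ {x y : ℝ}, 0 < x → 0 < y → arctan (y/x) ∈ Set.Ioo (0:ℝ) (π/2) := by
    intro x y hx hy
    constructor
    · simpa [Real.arctan_zero] using Real.arctan_strictMono (div_pos hy hx)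
    · exact Real.arctan_lt_pi_div_two _
  refine ⟨?_, ?_, ?_⟩
  · rintro ⟨x, y⟩ hx hy
    simp only at hx hy
    have hg : (0:ℝ) < x^2 + y^2 := by positivity
    have hθm := hmem hx hy
    have hKθ := hK1 _ hθm
    have hKθ2 := hK2 _ hθm
    have kpos := hpos _ hθm
    -- second derivative in x
    have hev0 : ∀ᶠ t in nhds x, (0:ℝ) < t := eventually_gt_nhds hx
    have hev1 : (fun t => psiTilde s ε K (t, y)) =ᶠ[nhds x] (fun t => Efun c β K t y) :=
      hev0.mono fun t ht => hpt t y ht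
    have hev2 : deriv (fun t => Efun c β K t y) =ᶠ[nhds x] (fun t => FX c β K t y) :=
      hev0.mono fun t ht => (hasDerivAt_E_x c β K ht hy (hK1 _ (hmem ht hy))).deriv
    have hdx : deriv (fun t => deriv (fun t' => psiTilde s ε K (t', y)) t) x
        = -(c * ((x^2+y^2) ^ (β-2) *
          (4*β*(β-1)*x^2*K (arctan (y/x)) - 2*(β-1)*x*y*deriv K (arctan (y/x))
           + 2*β*(x^2+y^2)*K (arctan (y/x)) - 2*β*x*y*deriv K (arctan (y/x))
           + y^2*deriv (deriv K) (arctan (y/x))))) := by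
      rw [Filter.EventuallyEq.deriv_eq (hev1.deriv.trans hev2)]
      exact (hasDerivAt_FX c β K hx hy hKθ hKθ2).deriv
    -- second derivative in y
    have hev1' : (fun t => psiTilde s ε K (x, t)) =ᶠ[nhds y] (fun t => Efun c β K x t) :=
      Filter.Eventually.of_forall fun t => hpt x t hx
    have hev0' : ∀ᶠ t in nhds y, (0:ℝ) < t := eventually_gt_nhds hy
    have hev2' : deriv (fun t => Efun c β K x t) =ᶠ[nhds y] (fun t => FY c β K x t) :=
      hev0'.mono fun t ht => (hasDerivAt_E_y c β K hx ht (hK1 _ (hmem hx ht))).deriv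
    have hdy : deriv (fun t => deriv (fun t' => psiTilde s ε K (x, t')) t) y
        = -(c * ((x^2+y^2) ^ (β-2) *
          (4*β*(β-1)*y^2*K (arctan (y/x)) + 2*(β-1)*x*y*deriv K (arctan (y/x))
           + 2*β*(x^2+y^2)*K (arctan (y/x)) + 2*β*x*y*deriv K (arctan (y/x))
           + x^2*deriv (deriv K) (arctan (y/x))))) := by
      rw [Filter.EventuallyEq.deriv_eq (hev1'.deriv.trans hev2')]
      exact (hasDerivAt_FY c β K hx hy hKθ hKθ2).deriv
    show deriv (fun t => deriv (fun t' => psiTilde s ε K (t', y)) t) x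
        + deriv (fun t => deriv (fun t' => psiTilde s ε K (x, t')) t) y
        = ε ^ s / (-(psiTilde s ε K (x, y))) ^ s
    rw [hdx, hdy, hpt x y hx]
    have hode' := hode _ hθm
    have hk'' : deriv (deriv K) (arctan (y/x))
        = -(K (arctan (y/x)))^(-s) - 4*β^2*K (arctan (y/x)) := by
      have h4 : 4/(1+s)^2 = 4*β^2 := by rw [hβ]; field_simp; ring
      rw [h4] at hode'; linarith
    have key : -(c * ((x^2+y^2) ^ (β-2) *
          (4*β*(β-1)*x^2*K (arctan (y/x)) - 2*(β-1)*x*y*deriv K (arctan (y/x))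
           + 2*β*(x^2+y^2)*K (arctan (y/x)) - 2*β*x*y*deriv K (arctan (y/x))
           + y^2*deriv (deriv K) (arctan (y/x)))))
        + -(c * ((x^2+y^2) ^ (β-2) *
          (4*β*(β-1)*y^2*K (arctan (y/x)) + 2*(β-1)*x*y*deriv K (arctan (y/x))
           + 2*β*(x^2+y^2)*K (arctan (y/x)) + 2*β*x*y*deriv K (arctan (y/x))
           + x^2*deriv (deriv K) (arctan (y/x)))))
        = c * (x^2+y^2) ^ (β-1) * (K (arctan (y/x)))^(-s) := by
      rw [hk'', show (β:ℝ)-1 = (β-2)+1 from by ring, Real.rpow_add_one hg.ne']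
      generalize (x^2+y^2 : ℝ) ^ ((β:ℝ)-2) = G
      generalize (K (arctan (y/x)) : ℝ) ^ (-s) = M
      ring
    rw [key]
    simp only [Efun, neg_neg]
    set k := K (arctan (y/x)) with hk
    have h1 : (c * (x^2+y^2)^β * k)^s = c^s * ((x^2+y^2)^β)^s * k^s := by
      rw [Real.mul_rpow (by positivity) kpos.le, Real.mul_rpow hcpos.le (by positivity)]
    have h2 : ((x^2+y^2)^β)^s = (x^2+y^2)^(β*s) := (Real.rpow_mul hg.le β s).symm
    have h3 : (c:ℝ)^s = ε^(s/(s+1)*s) := by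
      rw [hc, ← Real.rpow_mul hε.le]
    have h4 : ε^s = ε^(s/(s+1)*s) * ε^(s/(s+1)) := by
      rw [← Real.rpow_add hε]; congr 1; field_simp
    have h5 : (x^2+y^2)^(β-1) = ((x^2+y^2)^(β*s))⁻¹ := by
      rw [show (β:ℝ) - 1 = -(β*s) from by rw [hβ]; field_simp; ring,
        Real.rpow_neg hg.le]
    have h6 : (k:ℝ)^(-s) = (k^s)⁻¹ := Real.rpow_neg kpos.le s
    rw [h1, h2, h3, h4, h5, h6]
    have p1 : (0:ℝ) < ε^(s/(s+1)*s) := Real.rpow_pos_of_pos hε _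
    have p2 : (0:ℝ) < (x^2+y^2)^(β*s) := Real.rpow_pos_of_pos hg _
    have p3 : (0:ℝ) < k^s := Real.rpow_pos_of_pos kpos _
    rw [hc]
    field_simp
  · intro x hx
    show -(c * (Real.sqrt (x^2 + 0^2)) ^ (2/(s+1)) * K (Complex.arg (Complex.mk x 0))) = 0
    rw [show Complex.mk x 0 = (x:ℂ) from rfl, Complex.arg_ofReal_of_nonneg hx, hK0]
    ring
  · intro y hy
    show -(c * (Real.sqrt (0^2 + y^2)) ^ (2/(s+1)) * K (Complex.arg (Complex.mk 0 y))) = 0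
    rcases eq_or_lt_of_le hy with h | h
    · rw [show Complex.mk 0 y = ((0:ℝ):ℂ) from by rw [← h]; rfl,
        Complex.arg_ofReal_of_nonneg le_rfl, hK0]
      ring
    · rw [show Complex.mk 0 y = (y:ℂ) * Complex.I from by apply Complex.ext <;> simp,
        Complex.arg_real_mul _ h, Complex.arg_I, hKpi]
      ring
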